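/- arXiv:2306.13978 — 2 statements merged into one kernel-verified Lean document; each statement's English description precedes it below -/
import Mathlib

section
/- Let a₀ = 1 and a₁,…,a_d ∈ ℝ, and define the linear operator T on real polynomials of degree at most d by T(p) = Σ_{j=0}^{d} a_j p^{(j)}. If the polynomial Q(z) = T(z^d) = Σ_{j=0}^{d} a_j (d!/(d−j)!) z^{d−j} has only real roots, then T preserves real-rootedness: for every real polynomial p of degree at most d with only real roots, T(p) has only real roots. -/
open Polynomial

/-- The differential operator `T p = Σ_{j=0}^d a_j p^{(j)}`. -/
noncomputable def Tdiff (d : ℕ) (a : ℕ → ℝ) (p : Polynomial ℝ) : Polynomial ℝ :=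
  ∑ j ∈ Finset.range (d + 1), a j • (Polynomial.derivative^[j] p)

/-!
Write `T_Q` for the operator `Σ aⱼ D^j` with `T_Q (X^d) = Q`. If `Q = (X - r) Q₁`, then
`(d + 1) T_Q f (z) = T_{Q₁} g (z)`, where `g = (d + 1) f - (X - w) f'` is the polar derivative of
`f` with pole `w = z - r`. When `Im r ≤ 0 < Im z` the pole lies in the upper half-plane, so by
Laguerre's theorem `g` has no zeros there if `f` has none; as `deg g ≤ d`, induction on the number
of roots of `Q` shows that `T_Q` preserves this stability. For real polynomials, stability is
real-rootedness.
-/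

namespace Complex

/- `y ‖v‖² + Im v ≤ 0` says that `v` lies in the closed disc onto which `u ↦ u⁻¹` maps the
half-plane `y ≤ Im u`; `Multiset.mul_normSq_sum_add_mul_im_sum_nonpos` is the convexity of
this disc. -/
theorem mul_normSq_inv_add_inv_im_nonpos {y : ℝ} {u : ℂ} (hu : y ≤ u.im) :
    y * normSq u⁻¹ + u⁻¹.im ≤ 0 := by
  rw [normSq_inv, inv_im, ← div_eq_mul_inv, neg_div, ← sub_eq_add_neg, ← sub_div]
  exact div_nonpos_of_nonpos_of_nonneg (by linarith) (normSq_nonneg u)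

theorem mul_normSq_add_add_mul_im_nonpos {y m : ℝ} {S v : ℂ} (hy : 0 < y) (hm : 0 ≤ m)
    (hS : y * normSq S + m * S.im ≤ 0) (hv : y * normSq v + v.im ≤ 0) :
    y * normSq (S + v) + (m + 1) * (S + v).im ≤ 0 := by
  rcases hm.eq_or_lt with rfl | hm
  · have hS0 : S = 0 := normSq_eq_zero.1 <|
      le_antisymm (by nlinarith [normSq_nonneg S]) (normSq_nonneg S)
    simpa [hS0] using hv
  · have h1 := mul_nonpos_of_nonneg_of_nonpos (by linarith : 0 ≤ m + 1) hS
    have h2 := mul_nonpos_of_nonneg_of_nonpos (by positivity : 0 ≤ m * (m + 1)) hv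
    have h3 := mul_nonneg hy.le (normSq_nonneg (S - m * v))
    have hmul : m * (y * normSq (S + v) + (m + 1) * (S + v).im) ≤ 0 := by
      simp only [normSq_apply, add_re, add_im, sub_re, sub_im, mul_re, mul_im, ofReal_re,
        ofReal_im, zero_mul, sub_zero, add_zero] at h1 h2 h3 ⊢
      linear_combination h1 + h2 + h3
    exact nonpos_of_mul_nonpos_right hmul hm

end Complex

theorem Multiset.mul_normSq_sum_add_mul_im_sum_nonpos {y : ℝ} (hy : 0 < y) {s : Multiset ℂ}
    (hs : ∀ v ∈ s, y * Complex.normSq v + v.im ≤ 0) {n : ℕ} (hn : card s ≤ n) :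
    y * Complex.normSq s.sum + n * s.sum.im ≤ 0 := by
  induction s using Multiset.induction_on generalizing n with
  | empty => simp
  | cons v s ih =>
    obtain ⟨m, rfl⟩ : ∃ m, n = m + 1 := ⟨n - 1, by rw [card_cons] at hn; omega⟩
    rw [Multiset.sum_cons, add_comm v, Nat.cast_succ]
    exact Complex.mul_normSq_add_add_mul_im_nonpos hy m.cast_nonneg
      (ih (fun v hv => hs v (mem_cons_of_mem hv)) (by simpa using hn)) (hs v (mem_cons_self v s))

namespace Polynomial

section CommRing

variable {R : Type*} [CommRing R]

/-- `d!` times the operator `Σ aⱼ D^j` that maps `X^d` to `Q` (see `symbolOp_Tdiff_X_pow`). -/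
noncomputable def symbolOp (d : ℕ) (Q : R[X]) : Module.End R R[X] :=
  ∑ i ∈ Finset.range (d + 1), (Q.coeff i * i.factorial) • derivative ^ (d - i)

theorem symbolOp_apply (d : ℕ) (Q f : R[X]) :
    symbolOp d Q f =
      ∑ i ∈ Finset.range (d + 1), (Q.coeff i * i.factorial) • derivative^[d - i] f := by
  simp [symbolOp, Module.End.pow_apply]

theorem symbolOp_X_sub_C_mul {d : ℕ} {Q : R[X]} (hQ : Q.natDegree ≤ d) (r : R) (f : R[X]) :
    symbolOp (d + 1) ((X - C r) * Q) f =
      symbolOp d Q ((d + 1 : ℕ) • f - derivative f * X) +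
        (X - C r) * symbolOp d Q (derivative f) := by
  simp only [symbolOp_apply, sub_mul, coeff_sub, coeff_C_mul, sub_smul, Finset.sum_sub_distrib]
  rw [Finset.sum_range_succ', Finset.sum_range_succ _ (d + 1)]
  simp only [coeff_X_mul, coeff_X_mul_zero, coeff_eq_zero_of_natDegree_lt (Nat.lt_succ_of_le hQ),
    zero_mul, zero_smul, mul_zero, add_zero, Finset.mul_sum, ← Finset.sum_sub_distrib,
    ← Finset.sum_add_distrib]
  refine Finset.sum_congr rfl fun i hi => ?_
  obtain ⟨k, rfl⟩ := Nat.exists_eq_add_of_le (Nat.lt_succ_iff.mp (Finset.mem_range.mp hi))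
  rw [show i + k + 1 - (i + 1) = k by omega, show i + k + 1 - i = k + 1 by omega,
    Nat.add_sub_cancel_left, iterate_derivative_sub, iterate_derivative_smul,
    iterate_derivative_derivative_mul_X, ← Function.iterate_succ_apply, Nat.factorial_succ]
  simp only [smul_eq_C_mul, nsmul_eq_mul, Nat.succ_eq_add_one, map_mul, map_natCast]
  push_cast
  ring

noncomputable def polarDeriv (n : ℕ) (w : R) (f : R[X]) : R[X] :=
  n • f - derivative f * (X - C w)

theorem eval_symbolOp_X_sub_C_mul {d : ℕ} {Q : R[X]} (hQ : Q.natDegree ≤ d) (r z : R)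
    (f : R[X]) :
    eval z (symbolOp (d + 1) ((X - C r) * Q) f) =
      eval z (symbolOp d Q (polarDeriv (d + 1) (z - r) f)) := by
  have hpolar : polarDeriv (d + 1) (z - r) f =
      ((d + 1 : ℕ) • f - derivative f * X) + (z - r) • derivative f := by
    rw [polarDeriv, smul_eq_C_mul]
    ring
  rw [symbolOp_X_sub_C_mul hQ, hpolar, map_add, map_smul]
  simp only [eval_add, eval_mul, eval_sub, eval_X, eval_C, eval_smul, smul_eq_mul]

theorem natDegree_polarDeriv_le {n : ℕ} {f : R[X]} (hf : f.natDegree ≤ n + 1) (w : R) :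
    (polarDeriv (n + 1) w f).natDegree ≤ n := by
  rw [natDegree_le_iff_coeff_eq_zero]
  intro N hN
  obtain ⟨k, rfl⟩ := Nat.exists_eq_add_of_lt hN
  have hf2 : f.coeff (n + k + 1 + 1) = 0 := coeff_eq_zero_of_natDegree_lt (by omega)
  simp only [polarDeriv, mul_sub, coeff_sub, coeff_smul, coeff_mul_X, coeff_mul_C,
    coeff_derivative, hf2, zero_mul, sub_zero]
  rw [nsmul_eq_mul]
  rcases k with _ | k
  · push_cast
    ring
  · simp [coeff_eq_zero_of_natDegree_lt (show f.natDegree < n + (k + 1) + 1 by omega)]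

theorem map_symbolOp {S : Type*} [CommRing S] (φ : R →+* S) (d : ℕ) (Q f : R[X]) :
    (symbolOp d Q f).map φ = symbolOp d (Q.map φ) (f.map φ) := by
  simp [symbolOp_apply, Polynomial.map_sum, Polynomial.map_smul, iterate_derivative_map]

end CommRing

/-- Stability with respect to the upper half-plane; in particular `0` is not stable. -/
def IsStable (f : ℂ[X]) : Prop :=
  ∀ z : ℂ, 0 < z.im → f.eval z ≠ 0

theorem IsStable.of_smul {c : ℂ} {f : ℂ[X]} (hf : IsStable (c • f)) : IsStable f :=
  fun z hz h0 => hf z hz (by rw [eval_smul, h0, smul_zero])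

theorem IsStable.polarDeriv {f : ℂ[X]} (hf : IsStable f) {n : ℕ} (hn : n ≠ 0)
    (hdeg : f.natDegree ≤ n) {w : ℂ} (hw : 0 < w.im) : IsStable (polarDeriv n w f) := by
  intro z hz hzero
  set S := (f.roots.map fun x => 1 / (z - x)).sum
  have hfz := hf z hz
  have hS : (n : ℂ) = S * (z - w) := by
    have hlog := (IsAlgClosed.splits f).eval_derivative_eq_eval_mul_sum hfz
    simp only [Polynomial.polarDeriv, eval_sub, eval_mul, eval_natCast, eval_X, eval_C,
      nsmul_eq_mul, hlog] at hzero
    exact mul_left_cancel₀ hfz (by linear_combination hzero)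
  have hsum : z.im * Complex.normSq S + n * S.im ≤ 0 := by
    refine Multiset.mul_normSq_sum_add_mul_im_sum_nonpos hz ?_ ?_
    · simp only [Multiset.mem_map]
      rintro _ ⟨x, hx, rfl⟩
      have hx_im : x.im ≤ 0 := not_lt.1 fun h => hf x h (isRoot_of_mem_roots hx)
      rw [one_div]
      exact Complex.mul_normSq_inv_add_inv_im_nonpos (by rw [Complex.sub_im]; linarith)
    · rw [Multiset.card_map]
      exact (card_roots' f).trans hdeg
  have hre := congrArg Complex.re hS
  have him := congrArg Complex.im hS
  simp only [Complex.natCast_re, Complex.natCast_im, Complex.mul_re, Complex.mul_im,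
    Complex.sub_re, Complex.sub_im] at hre him
  have hwS : w.im * Complex.normSq S ≤ 0 := by
    rw [Complex.normSq_apply] at hsum ⊢
    linear_combination hsum - S.im * hre + S.re * him
  have hS0 : S = 0 := Complex.normSq_eq_zero.1 <|
    le_antisymm (nonpos_of_mul_nonpos_right hwS hw) (Complex.normSq_nonneg S)
  simp [hS0, hn] at hS

theorem IsStable.symbolOp_prod_X_sub_C {s : Multiset ℂ} (hs : ∀ r ∈ s, r.im ≤ 0) {f : ℂ[X]}
    (hf : IsStable f) (hdeg : f.natDegree ≤ Multiset.card s) :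
    IsStable (symbolOp (Multiset.card s) (s.map (X - C ·)).prod f) := by
  induction s using Multiset.induction_on generalizing f with
  | empty => simpa [symbolOp_apply] using hf
  | cons r s ih =>
    intro z hz
    have hr := hs r (Multiset.mem_cons_self r s)
    rw [Multiset.card_cons] at hdeg ⊢
    rw [Multiset.map_cons, Multiset.prod_cons,
      eval_symbolOp_X_sub_C_mul (natDegree_multiset_prod_X_sub_C_eq_card s).le]
    refine ih (fun x hx => hs x (Multiset.mem_cons_of_mem hx))
      (hf.polarDeriv (Nat.succ_ne_zero _) hdeg ?_) (natDegree_polarDeriv_le hdeg _) z hz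
    simp only [Complex.sub_im]
    linarith

theorem IsStable.symbolOp_of_monic {Q : ℂ[X]} (hQ : Q.Monic) (hroots : ∀ r ∈ Q.roots, r.im ≤ 0)
    {f : ℂ[X]} (hf : IsStable f) (hdeg : f.natDegree ≤ Q.natDegree) :
    IsStable (symbolOp Q.natDegree Q f) := by
  have := hf.symbolOp_prod_X_sub_C hroots (by rwa [IsAlgClosed.card_roots_eq_natDegree])
  rwa [← (IsAlgClosed.splits Q).eq_prod_roots_of_monic hQ, IsAlgClosed.card_roots_eq_natDegree]
    at this

theorem isStable_map_iff {p : ℝ[X]} :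
    IsStable (p.map (algebraMap ℝ ℂ)) ↔ ∀ z : ℂ, aeval z p = 0 → z.im = 0 := by
  simp only [IsStable, eval_map_algebraMap]
  refine ⟨fun hp z hz => ?_, fun hp z hz h0 => hz.ne' (hp z h0)⟩
  by_contra hne
  rcases lt_or_gt_of_ne hne with hlt | hgt
  · refine hp (starRingEnd ℂ z) (by simpa using hlt) ?_
    rw [← Complex.conjAe_coe, ← AlgEquiv.coe_toAlgHom, aeval_algHom_apply, hz, map_zero]
  · exact hp z hgt hz

theorem natDegree_Tdiff_le {d : ℕ} (a : ℕ → ℝ) {p : ℝ[X]} (hp : p.natDegree ≤ d) :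
    (Tdiff d a p).natDegree ≤ d :=
  natDegree_sum_le_of_forall_le _ _ fun j _ =>
    (natDegree_smul_le _ _).trans <| (natDegree_iterate_derivative p j).trans <| by omega

theorem coeff_Tdiff_X_pow (d : ℕ) (a : ℕ → ℝ) {i : ℕ} (hi : i ≤ d) :
    (Tdiff d a (X ^ d)).coeff i = a (d - i) * d.descFactorial (d - i) := by
  rw [Tdiff, finsetSum_coeff, Finset.sum_eq_single (d - i)]
  · simp [iterate_derivative_X_pow_eq_smul, Nat.sub_sub_self hi]
  · intro j hj hji
    have hj : j ≤ d := Nat.lt_succ_iff.mp (Finset.mem_range.mp hj)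
    rw [iterate_derivative_X_pow_eq_smul, coeff_smul, coeff_smul, coeff_X_pow,
      if_neg (by omega), smul_zero, smul_zero]
  · simp

theorem symbolOp_Tdiff_X_pow (d : ℕ) (a : ℕ → ℝ) (p : ℝ[X]) :
    symbolOp d (Tdiff d a (X ^ d)) p = (d.factorial : ℝ) • Tdiff d a p := by
  conv_rhs => rw [Tdiff, Finset.smul_sum]
  conv_lhs => rw [symbolOp_apply, ← Finset.sum_range_reflect]
  refine Finset.sum_congr rfl fun i hi => ?_
  have hi : i ≤ d := Nat.lt_succ_iff.mp (Finset.mem_range.mp hi)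
  rw [Nat.add_sub_cancel, smul_smul, coeff_Tdiff_X_pow d a (Nat.sub_le d i), Nat.sub_sub_self hi,
    mul_assoc, mul_comm (a i)]
  congr 2
  exact_mod_cast (mul_comm _ _).trans (Nat.factorial_mul_descFactorial hi)

end Polynomial

theorem stmt_5 (d : ℕ) (a : ℕ → ℝ) (ha0 : a 0 = 1)
    -- `Q(z) = T(z^d) = Σ_j a_j (d!/(d−j)!) z^{d−j}` has only real roots:
    (hQ : ∀ z : ℂ, Polynomial.aeval z (Tdiff d a (Polynomial.X ^ d)) = 0 → z.im = 0) :
    -- then `T` preserves real-rootedness on polynomials of degree at most `d`: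
    ∀ p : Polynomial ℝ, p.natDegree ≤ d →
      (∀ z : ℂ, Polynomial.aeval z p = 0 → z.im = 0) →
      (∀ z : ℂ, Polynomial.aeval z (Tdiff d a p) = 0 → z.im = 0) := by
  intro p hpd hp
  set Q := Tdiff d a (X ^ d)
  have hQle : Q.natDegree ≤ d := natDegree_Tdiff_le a (natDegree_X_pow_le d)
  have hQd : Q.coeff d = 1 := by simp [Q, coeff_Tdiff_X_pow, ha0]
  have hQmonic : Q.Monic := monic_of_natDegree_le_of_coeff_eq_one d hQle hQd
  have hQdeg : (Q.map (algebraMap ℝ ℂ)).natDegree = d := by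
    rw [hQmonic.natDegree_map]
    exact natDegree_eq_of_le_of_coeff_ne_zero hQle (by simp [hQd])
  have hstab := IsStable.symbolOp_of_monic (hQmonic.map (algebraMap ℝ ℂ))
    (fun r hr => (hQ r (by simpa using isRoot_of_mem_roots hr)).le) (isStable_map_iff.2 hp)
    (natDegree_map_le.trans (hpd.trans_eq hQdeg.symm))
  rw [hQdeg, ← map_symbolOp, symbolOp_Tdiff_X_pow, Polynomial.map_smul] at hstab
  exact isStable_map_iff.1 hstab.of_smul
end

section
/- Let P be a polynomial on ℝⁿ hyperbolic with respect to the xₙ direction, let 1 ≤ k ≤ n−1, and let s ∈ ℝ. Then the polynomial T_{k,s}(P) := P + s·x_k·∂P/∂xₙ is hyperbolic with respect to the xₙ direction. -/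
/-!
Along a line `x + t·eₙ` the polynomial `P` restricts to a polynomial `f(t)` with only real
roots, and since `x_k` is constant on that line, `T_{k,s}(P)` restricts to `f + c·f'` with
`c = s·x_k` real. At a non-real `z` we have `f(z) ≠ 0` and `f'(z)/f(z) = ∑ 1/(z - r)` over the
roots `r` of `f`; as all `r` are real, every `Im (1/(z - r))` has the sign of `-Im z`, so
`1 + c·f'(z)/f(z)` cannot vanish.
-/

/-- `P` is (Gårding) hyperbolic with respect to the direction `e`. -/
def IsHyperbolic {n : ℕ} (P : MvPolynomial (Fin n) ℝ) (e : Fin n → ℝ) : Prop :=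
  ∀ x : Fin n → ℝ, ∀ t : ℂ,
    MvPolynomial.eval (fun i => (x i : ℂ) + t * (e i : ℂ))
      (MvPolynomial.map (algebraMap ℝ ℂ) P) = 0 → t.im = 0

open Polynomial

theorem Complex.im_mul_im_one_div_sub_neg {z r : ℂ} (hz : z.im ≠ 0) (hr : r.im = 0) :
    z.im * (1 / (z - r)).im < 0 := by
  have hne : z - r ≠ 0 := fun h => hz (by simpa [hr] using congrArg Complex.im h)
  rw [one_div, Complex.inv_im, Complex.sub_im, hr, sub_zero, mul_div_assoc', mul_neg, neg_div]
  exact neg_neg_of_pos (div_pos (mul_self_pos.mpr hz) (Complex.normSq_pos.mpr hne))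

theorem Complex.im_mul_im_sum_one_div_sub_neg {z : ℂ} (hz : z.im ≠ 0) {s : Multiset ℂ}
    (hs : s ≠ 0) (hs_real : ∀ r ∈ s, r.im = 0) :
    z.im * (s.map fun r ↦ 1 / (z - r)).sum.im < 0 := by
  have him : (s.map fun r ↦ 1 / (z - r)).sum.im = (s.map fun r ↦ (1 / (z - r)).im).sum := by
    simpa [Multiset.map_map] using
      map_multiset_sum Complex.imAddGroupHom (s.map fun r ↦ 1 / (z - r))
  rw [him, ← Multiset.sum_map_mul_left]
  calc (s.map fun r ↦ z.im * (1 / (z - r)).im).sum < (s.map fun _ ↦ (0 : ℝ)).sum :=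
        Multiset.sum_lt_sum_of_nonempty hs fun r hr =>
          Complex.im_mul_im_one_div_sub_neg hz (hs_real r hr)
    _ = 0 := by simp

theorem Polynomial.im_eq_zero_of_eval_add_mul_derivative_eq_zero {f : ℂ[X]}
    (hf : ∀ w, f.IsRoot w → w.im = 0) (c : ℝ) {z : ℂ}
    (hz : f.eval z + c * f.derivative.eval z = 0) : z.im = 0 := by
  by_contra hz_im
  have hfz : f.eval z ≠ 0 := fun h => hz_im (hf z h)
  set S := (f.roots.map fun r ↦ 1 / (z - r)).sum
  have hS : 1 + c * S = 0 := by
    rw [(IsAlgClosed.splits f).eval_derivative_eq_eval_mul_sum hfz] at hz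
    refine (mul_eq_zero.mp ?_).resolve_left hfz
    linear_combination hz
  have hroots : f.roots ≠ 0 := by
    rintro h
    simp [S, h] at hS
  have hS_im : z.im * S.im < 0 := Complex.im_mul_im_sum_one_div_sub_neg hz_im hroots
    fun r hr => hf r (isRoot_of_mem_roots hr)
  have hc : c * S.im = 0 := by simpa using congrArg Complex.im hS
  have hc0 : c = 0 := (mul_eq_zero.mp hc).resolve_right fun h => by simp [h] at hS_im
  simp [hc0] at hS

namespace MvPolynomial

variable {σ : Type*}

-- `t ↦ P(x + t·e)`, with complex coefficients so that it splits.
noncomputable def lineRestriction (x e : σ → ℝ) : MvPolynomial σ ℝ →ₐ[ℝ] ℂ[X] :=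
  aeval fun i ↦ Polynomial.C (x i : ℂ) + Polynomial.C (e i : ℂ) * Polynomial.X

theorem eval_lineRestriction (x e : σ → ℝ) (t : ℂ) (P : MvPolynomial σ ℝ) :
    (lineRestriction x e P).eval t =
      eval (fun i ↦ (x i : ℂ) + t * e i) (map (algebraMap ℝ ℂ) P) := by
  induction P using MvPolynomial.induction_on with
  | C a => simp [lineRestriction]
  | add p q hp hq => simp [hp, hq]
  | mul_X p i hp =>
    rw [map_mul, Polynomial.eval_mul, hp, map_mul, eval_mul]
    congr 1
    simp [lineRestriction, mul_comm t]

theorem derivative_lineRestriction_single [DecidableEq σ] (x : σ → ℝ) (j : σ)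
    (P : MvPolynomial σ ℝ) :
    derivative (lineRestriction x (Pi.single j 1) P) =
      lineRestriction x (Pi.single j 1) (pderiv j P) := by
  induction P using MvPolynomial.induction_on with
  | C a => simp [lineRestriction]
  | add p q hp hq => simp [hp, hq]
  | mul_X p i hp =>
    rw [pderiv_mul, map_mul, derivative_mul, hp, map_add, map_mul, map_mul, pderiv_X]
    rcases eq_or_ne i j with rfl | hij
    · simp [lineRestriction, add_comm]
    · simp [lineRestriction, hij]

end MvPolynomial

-- The paper's ℝⁿ is `Fin (n + 1) → ℝ` here, so its `xₙ` is `Fin.last n` and its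
-- `1 ≤ k ≤ n − 1` is `Fin.castSucc k` for `k : Fin n`.
/-- The first-order Nuij operator `T_{k,s}(P) = P + s·x_k·∂P/∂xₙ` preserves
hyperbolicity with respect to the `xₙ` direction (here `k` ranges over the
first `n` variables, i.e. `1 ≤ k ≤ n − 1` in the variables `x₁,…,xₙ`). -/
theorem stmt_7 (n : ℕ) (P : MvPolynomial (Fin (n + 1)) ℝ)
    (hP : IsHyperbolic P (Pi.single (Fin.last n) 1))
    (k : Fin n) (s : ℝ) :
    IsHyperbolic
      (P + MvPolynomial.C s * MvPolynomial.X (Fin.castSucc k) *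
        MvPolynomial.pderiv (Fin.last n) P)
      (Pi.single (Fin.last n) 1) := by
  intro x t ht
  set f := MvPolynomial.lineRestriction x (Pi.single (Fin.last n) 1) P
  have hf : ∀ w, f.IsRoot w → w.im = 0 := fun w hw =>
    hP x w (by rwa [IsRoot, MvPolynomial.eval_lineRestriction] at hw)
  refine im_eq_zero_of_eval_add_mul_derivative_eq_zero hf (s * x k.castSucc) ?_
  rw [MvPolynomial.derivative_lineRestriction_single, MvPolynomial.eval_lineRestriction,
    MvPolynomial.eval_lineRestriction]
  simpa [(Fin.castSucc_lt_last k).ne, mul_assoc] using ht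
end
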